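/- There exists an LTAG₀ grammar generating the crossed-dependency language { aⁿ bᵐ cⁿ dᵐ : n, m ≥ 1 }. -/

import Mathlib

/-!
The grammar has initial trees `S(a B↓ D↓)`, `B((Q)(b C↓))`, `C(c)`, `D(d)` and auxiliary trees
`Q((Q)(b Q*) D↓)`, `Q((R)(a Q* C↓))`, `R((R)(a R* C↓))`. Adjoining the first auxiliary tree at the
mark `(Q)` puts one more `b` inside the marked subtree and one more `d` after it; the second turns
the `Q`-mark into an `R`-mark with an `a … c` pair around it, and the third adds further `a … c`
pairs, so the `a`s and `c`s nest around the `b`s while the `b`s and `d`s cross.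

For the inclusion of the language in `{aⁿ bᵐ cⁿ dᵐ}`, read the frontier of a derived tree with its
adjunction mark as a pair of brackets and with `C↓`, `D↓` read as `c`, `d`. A derived tree carries
at most one mark, and the marked part of its frontier is a block `⟨a^k b^i x c^k⟩ d^i` (with `k = 0`
under a `Q`-mark); adjoining an auxiliary tree splices its own block around `x`, which just adds
up the exponents. The converse inclusion is witnessed by explicit derivations.
-/

/-- Node labels of LTAG₀ trees: terminals, substitution leaves A↓, substitution
nonterminals, adjunction-marked nodes (T), unmarked adjunction nonterminals and
foot nodes T*. -/
inductive Lab (T NS NA : Type) where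
  | term : T → Lab T NS NA        -- terminal leaf
  | substLeaf : NS → Lab T NS NA  -- A↓, awaiting substitution
  | nonterm : NS → Lab T NS NA    -- substitution nonterminal (root/internal)
  | adj : NA → Lab T NS NA        -- (T), adjunction allowed here
  | anode : NA → Lab T NS NA      -- adjunction nonterminal, no adjunction mark
  | foot : NA → Lab T NS NA       -- T*, foot node of an auxiliary tree

/-- Finitely branching labelled trees. -/
inductive LTree (T NS NA : Type) where
  | node : Lab T NS NA → List (LTree T NS NA) → LTree T NS NA

namespace LTree

variable {T NS NA : Type}

def rootLabel : LTree T NS NA → Lab T NS NA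
  | .node l _ => l

mutual
  /-- The yield of a tree: the sequence of terminals at its leaves. -/
  def yield : LTree T NS NA → List T
    | .node (.term a) _ => [a]
    | .node (.substLeaf _) cs => yields cs
    | .node (.nonterm _) cs => yields cs
    | .node (.adj _) cs => yields cs
    | .node (.anode _) cs => yields cs
    | .node (.foot _) cs => yields cs
  def yields : List (LTree T NS NA) → List T
    | [] => []
    | t :: ts => yield t ++ yields ts
end

mutual
  /-- The number of terminal leaves of a tree. -/
  def termCount : LTree T NS NA → ℕ
    | .node (.term _) _ => 1
    | .node (.substLeaf _) cs => termCounts cs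
    | .node (.nonterm _) cs => termCounts cs
    | .node (.adj _) cs => termCounts cs
    | .node (.anode _) cs => termCounts cs
    | .node (.foot _) cs => termCounts cs
  def termCounts : List (LTree T NS NA) → ℕ
    | [] => 0
    | t :: ts => termCount t + termCounts ts
end

mutual
  /-- The number of foot nodes of a tree. -/
  def footCount : LTree T NS NA → ℕ
    | .node (.foot _) cs => 1 + footCounts cs
    | .node (.term _) cs => footCounts cs
    | .node (.substLeaf _) cs => footCounts cs
    | .node (.nonterm _) cs => footCounts cs
    | .node (.adj _) cs => footCounts cs
    | .node (.anode _) cs => footCounts cs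
  def footCounts : List (LTree T NS NA) → ℕ
    | [] => 0
    | t :: ts => footCount t + footCounts ts
end

mutual
  /-- A tree is complete when all of its leaves are terminal leaves. -/
  def Complete : LTree T NS NA → Prop
    | .node (.term _) cs => cs = []
    | .node (.substLeaf _) _ => False
    | .node (.foot _) _ => False
    | .node (.nonterm _) cs => cs ≠ [] ∧ CompleteList cs
    | .node (.adj _) cs => cs ≠ [] ∧ CompleteList cs
    | .node (.anode _) cs => cs ≠ [] ∧ CompleteList cs
  def CompleteList : List (LTree T NS NA) → Prop
    | [] => True
    | t :: ts => Complete t ∧ CompleteList ts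
end

/-- The subtree relation. -/
inductive Subtree : LTree T NS NA → LTree T NS NA → Prop
  | refl (t : LTree T NS NA) : Subtree t t
  | child {s u : LTree T NS NA} (l : Lab T NS NA) (cs : List (LTree T NS NA)) :
      u ∈ cs → Subtree s u → Subtree s (.node l cs)

/-- Substitution of the tree β (with root label `nonterm A`) for one
substitution leaf A↓. -/
inductive ReplaceSubst (β : LTree T NS NA) (A : NS) :
    LTree T NS NA → LTree T NS NA → Prop
  | here : rootLabel β = .nonterm A → ReplaceSubst β A (.node (.substLeaf A) []) β
  | step (l : Lab T NS NA) (pre post : List (LTree T NS NA)) {t t' : LTree T NS NA} :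
      ReplaceSubst β A t t' →
      ReplaceSubst β A (.node l (pre ++ t :: post)) (.node l (pre ++ t' :: post))

/-- Replacement of the foot node n* by the tree `sub`. -/
inductive FootReplace (n : NA) (sub : LTree T NS NA) :
    LTree T NS NA → LTree T NS NA → Prop
  | here : FootReplace n sub (.node (.foot n) []) sub
  | step (l : Lab T NS NA) (pre post : List (LTree T NS NA)) {t t' : LTree T NS NA} :
      FootReplace n sub t t' →
      FootReplace n sub (.node l (pre ++ t :: post)) (.node l (pre ++ t' :: post))

/-- Adjunction of the auxiliary(-derived) tree β (root `anode n`, with a foot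
node n*) at one node marked (n): the marked node is replaced by β, and the
original subtree below the node is spliced in at the foot of β. -/
inductive Adjoin (β : LTree T NS NA) : LTree T NS NA → LTree T NS NA → Prop
  | here (n : NA) (cs : List (LTree T NS NA)) {β' : LTree T NS NA} :
      rootLabel β = .anode n →
      FootReplace n (.node (.anode n) cs) β β' →
      Adjoin β (.node (.adj n) cs) β'
  | step (l : Lab T NS NA) (pre post : List (LTree T NS NA)) {t t' : LTree T NS NA} :
      Adjoin β t t' →
      Adjoin β (.node l (pre ++ t :: post)) (.node l (pre ++ t' :: post))

end LTree

/-- An LTAG₀ grammar: a start symbol, initial trees and auxiliary trees. -/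
structure LTAG0 (T NS NA : Type) where
  start : NS
  initial : Set (LTree T NS NA)
  auxTrees : Set (LTree T NS NA)

namespace LTAG0

variable {T NS NA : Type} (g : LTAG0 T NS NA)

/-- Well-formedness of an LTAG₀ grammar: finitely many elementary trees; every
elementary tree has exactly one terminal leaf; initial trees are rooted in
substitution nonterminals and have no foot node; every auxiliary tree is rooted
in an adjunction nonterminal and has exactly one foot node, labelled by the
same adjunction nonterminal as its root; and every adjunction node lies on the
path from the terminal leaf to the root (i.e. every subtree rooted at an
adjunction mark contains the terminal leaf). -/
def WellFormed : Prop :=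
  g.initial.Finite ∧ g.auxTrees.Finite ∧
  (∀ t ∈ g.initial ∪ g.auxTrees, LTree.termCount t = 1) ∧
  (∀ t ∈ g.initial, (∃ A : NS, LTree.rootLabel t = .nonterm A) ∧ LTree.footCount t = 0) ∧
  (∀ t ∈ g.auxTrees, ∃ n : NA, LTree.rootLabel t = .anode n ∧ LTree.footCount t = 1 ∧
      ∀ u, LTree.Subtree u t → ∀ m : NA, LTree.rootLabel u = .foot m → m = n) ∧
  (∀ t ∈ g.initial ∪ g.auxTrees, ∀ u, LTree.Subtree u t →
      (∃ n : NA, LTree.rootLabel u = .adj n) → 1 ≤ LTree.termCount u)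

/-- Derived trees: elementary trees closed under substitution and adjunction. -/
inductive Derived : LTree T NS NA → Prop
  | init {t} : t ∈ g.initial → Derived t
  | auxMem {t} : t ∈ g.auxTrees → Derived t
  | subst {t β t'} (A : NS) : Derived t → Derived β →
      LTree.ReplaceSubst β A t t' → Derived t'
  | adjoin {t β t'} : Derived t → Derived β →
      LTree.Adjoin β t t' → Derived t'

/-- The language generated by an LTAG₀ grammar: the yields of complete derived
trees rooted in the start symbol. -/
def language : Set (List T) :=
  {w | ∃ t, g.Derived t ∧ LTree.rootLabel t = .nonterm g.start ∧
        LTree.Complete t ∧ LTree.yield t = w}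

end LTAG0

namespace LTree

variable {T NS NA : Type}

inductive Token (T NS NA : Type) where
  | term : T → Token T NS NA
  | leaf : NS → Token T NS NA
  | foot : NA → Token T NS NA
  | lbrack : NA → Token T NS NA
  | rbrack : NA → Token T NS NA

def Token.term? : Token T NS NA → Option T
  | .term a => some a
  | _ => none

def leftTokens : Lab T NS NA → List (Token T NS NA)
  | .term a => [.term a]
  | .substLeaf A => [.leaf A]
  | .foot n => [.foot n]
  | .adj n => [.lbrack n]
  | .nonterm _ | .anode _ => []

def rightTokens : Lab T NS NA → List (Token T NS NA)
  | .adj n => [.rbrack n]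
  | _ => []

mutual
  /-- The frontier of a tree, in which every adjunction-marked node `(n)` shows up as a pair of
  brackets around the frontier of its children. Unlike `yield`, it also descends into the
  children of leaf-labelled nodes, so that it commutes with grafting at any position. -/
  def frontier : LTree T NS NA → List (Token T NS NA)
    | .node l cs => leftTokens l ++ frontiers cs ++ rightTokens l
  def frontiers : List (LTree T NS NA) → List (Token T NS NA)
    | [] => []
    | t :: ts => frontier t ++ frontiers ts
end

@[simp]
theorem frontiers_append (l₁ l₂ : List (LTree T NS NA)) :
    frontiers (l₁ ++ l₂) = frontiers l₁ ++ frontiers l₂ := by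
  induction l₁ with
  | nil => simp [frontiers]
  | cons t ts ih => simp [frontiers, ih]

theorem frontier_node_append_cons (l : Lab T NS NA) (pre post : List (LTree T NS NA))
    (t : LTree T NS NA) :
    frontier (.node l (pre ++ t :: post)) =
      leftTokens l ++ frontiers pre ++ frontier t ++ frontiers post ++ rightTokens l := by
  simp [frontier, frontiers]

theorem ReplaceSubst.rootLabel_eq_nonterm {β t t' : LTree T NS NA} {A : NS}
    (h : ReplaceSubst β A t t') : rootLabel β = .nonterm A := by
  induction h with
  | here h => exact h
  | step _ _ _ _ ih => exact ih

theorem ReplaceSubst.rootLabel_eq {β t t' : LTree T NS NA} {A : NS}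
    (h : ReplaceSubst β A t t') : rootLabel t' = rootLabel t ∨ rootLabel t = .substLeaf A := by
  cases h with
  | here => exact .inr rfl
  | step => exact .inl rfl

theorem Adjoin.rootLabel_eq {β t t' : LTree T NS NA} (h : Adjoin β t t') :
    rootLabel t' = rootLabel t ∨ ∃ n, rootLabel t = .adj n := by
  cases h with
  | here n => exact .inr ⟨n, rfl⟩
  | step => exact .inl rfl

theorem ReplaceSubst.frontier_eq {β t t' : LTree T NS NA} {A : NS}
    (h : ReplaceSubst β A t t') :
    ∃ u v, frontier t = u ++ .leaf A :: v ∧ frontier t' = u ++ frontier β ++ v := by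
  induction h with
  | here => exact ⟨[], [], by simp [frontier, frontiers, leftTokens, rightTokens], by simp⟩
  | step l pre post _ ih =>
    obtain ⟨u, v, ht, ht'⟩ := ih
    exact ⟨leftTokens l ++ frontiers pre ++ u, v ++ frontiers post ++ rightTokens l,
      by simp [frontier_node_append_cons, ht], by simp [frontier_node_append_cons, ht']⟩

theorem FootReplace.frontier_eq {s t t' : LTree T NS NA} {n : NA}
    (h : FootReplace n s t t') :
    ∃ u v, frontier t = u ++ .foot n :: v ∧ frontier t' = u ++ frontier s ++ v := by
  induction h with
  | here => exact ⟨[], [], by simp [frontier, frontiers, leftTokens, rightTokens], by simp⟩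
  | step l pre post _ ih =>
    obtain ⟨u, v, ht, ht'⟩ := ih
    exact ⟨leftTokens l ++ frontiers pre ++ u, v ++ frontiers post ++ rightTokens l,
      by simp [frontier_node_append_cons, ht], by simp [frontier_node_append_cons, ht']⟩

theorem Adjoin.frontier_eq {β t t' : LTree T NS NA} (h : Adjoin β t t') :
    ∃ n u w v p q, rootLabel β = .anode n ∧
      frontier t = u ++ .lbrack n :: w ++ .rbrack n :: v ∧
      frontier β = p ++ .foot n :: q ∧ frontier t' = u ++ p ++ w ++ q ++ v := by
  induction h with
  | here n cs hβ hf =>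
    obtain ⟨p, q, hp, hq⟩ := hf.frontier_eq
    refine ⟨n, [], frontiers cs, [], p, q, hβ, ?_, hp, ?_⟩ <;>
      simp [hq, frontier, leftTokens, rightTokens]
  | step l pre post _ ih =>
    obtain ⟨n, u, w, v, p, q, hβ, ht, hp, ht'⟩ := ih
    exact ⟨n, leftTokens l ++ frontiers pre ++ u, w, v ++ frontiers post ++ rightTokens l, p, q,
      hβ, by simp [frontier_node_append_cons, ht], hp, by simp [frontier_node_append_cons, ht']⟩

theorem Adjoin.iterate {β t t' : LTree T NS NA} {f : LTree T NS NA → LTree T NS NA}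
    (hf : ∀ {x x'}, Adjoin β x x' → Adjoin β (f x) (f x')) (n : ℕ) (h : Adjoin β t t') :
    Adjoin β (f^[n] t) (f^[n] t') := by
  induction n with
  | zero => exact h
  | succ n ih => simpa only [Function.iterate_succ_apply'] using hf ih

mutual
  theorem Complete.yield_eq_and_leaf_notMem {t : LTree T NS NA} (h : Complete t) :
      yield t = (frontier t).filterMap Token.term? ∧ ∀ A, .leaf A ∉ frontier t := by
    match t, h with
    | .node (.term a) cs, h =>
      simp only [Complete] at h
      subst h
      simp [yield, frontier, frontiers, leftTokens, rightTokens, Token.term?]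
    | .node (.nonterm _) cs, ⟨_, h⟩
    | .node (.anode _) cs, ⟨_, h⟩ =>
      simpa [yield, frontier, leftTokens, rightTokens] using h.yields_eq_and_leaf_notMem
    | .node (.adj _) cs, ⟨_, h⟩ =>
      simpa [yield, frontier, leftTokens, rightTokens, Token.term?, List.filterMap_cons] using
        h.yields_eq_and_leaf_notMem
  theorem CompleteList.yields_eq_and_leaf_notMem {ts : List (LTree T NS NA)}
      (h : CompleteList ts) :
      yields ts = (frontiers ts).filterMap Token.term? ∧ ∀ A, .leaf A ∉ frontiers ts := by
    match ts, h with
    | [], _ => simp [yields, frontiers]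
    | t :: ts, ⟨ht, hts⟩ =>
      obtain ⟨h₁, h₂⟩ := ht.yield_eq_and_leaf_notMem
      obtain ⟨h₃, h₄⟩ := hts.yields_eq_and_leaf_notMem
      simp_all [yields, frontiers]
end

theorem forall_subtree_node_iff {P : LTree T NS NA → Prop} {l : Lab T NS NA}
    {cs : List (LTree T NS NA)} :
    (∀ u, Subtree u (.node l cs) → P u) ↔
      P (.node l cs) ∧ ∀ c ∈ cs, ∀ u, Subtree u c → P u := by
  refine ⟨fun h => ⟨h _ (.refl _), fun c hc u hu => h u (.child l cs hc hu)⟩, ?_⟩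
  rintro ⟨h, hcs⟩ u (_ | ⟨_, _, hc, hu⟩)
  exacts [h, hcs _ hc _ hu]

end LTree

namespace Crossed

open LTree

inductive Nt
  | S | B | C | D

inductive AdjNt
  | Q | R

abbrev Tree := LTree (Fin 4) Nt AdjNt

abbrev Symbol := LTree.Token (Fin 4) Nt AdjNt

def leaf (l : Lab (Fin 4) Nt AdjNt) : Tree := .node l []

def αS : Tree := .node (.nonterm .S) [leaf (.term 0), leaf (.substLeaf .B), leaf (.substLeaf .D)]
def αB : Tree := .node (.nonterm .B) [.node (.adj .Q) [leaf (.term 1), leaf (.substLeaf .C)]]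
def αC : Tree := .node (.nonterm .C) [leaf (.term 2)]
def αD : Tree := .node (.nonterm .D) [leaf (.term 3)]
def βb : Tree :=
  .node (.anode .Q) [.node (.adj .Q) [leaf (.term 1), leaf (.foot .Q)], leaf (.substLeaf .D)]
def βa : Tree :=
  .node (.anode .Q) [.node (.adj .R) [leaf (.term 0), leaf (.foot .Q), leaf (.substLeaf .C)]]
def βa' : Tree :=
  .node (.anode .R) [.node (.adj .R) [leaf (.term 0), leaf (.foot .R), leaf (.substLeaf .C)]]

def grammar : LTAG0 (Fin 4) Nt AdjNt := ⟨.S, {αS, αB, αC, αD}, {βb, βa, βa'}⟩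

theorem grammar_wellFormed : grammar.WellFormed := by
  refine ⟨Set.toFinite {αS, αB, αC, αD}, Set.toFinite {βb, βa, βa'}, ?_, ?_, ?_, ?_⟩
  · rintro t ((rfl | rfl | rfl | rfl) | (rfl | rfl | rfl)) <;> rfl
  · rintro t (rfl | rfl | rfl | rfl) <;> exact ⟨⟨_, rfl⟩, rfl⟩
  · rintro t (rfl | rfl | rfl) <;> refine ⟨_, rfl, rfl, ?_⟩ <;>
      simp [forall_subtree_node_iff, βb, βa, βa', leaf, rootLabel]
  · rintro t ((rfl | rfl | rfl | rfl) | (rfl | rfl | rfl)) <;>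
      simp [forall_subtree_node_iff, αS, αB, αC, αD, βb, βa, βa', leaf, rootLabel, termCount,
        termCounts]

/-- `C↓` and `D↓` can only be replaced by `αC` and `αD`; reading them as `c` and `d` makes these
substitutions invisible on frontiers. -/
def fillSymbol : Symbol → Symbol
  | .leaf .C => .term 2
  | .leaf .D => .term 3
  | s => s

def fill (s : List Symbol) : List Symbol := s.map fillSymbol

/-- The block `⟨ₘ aᵏ bⁱ x cᵏ ⟩ₘ dⁱ`. -/
def form (m : AdjNt) (k i : ℕ) (x : List Symbol) : List Symbol :=
  .lbrack m :: (.replicate k (.term 0) ++ .replicate i (.term 1) ++ x ++ .replicate k (.term 2)) ++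
    .rbrack m :: .replicate i (.term 3)

def Marked (x s : List Symbol) : Prop := ∃ m k i, (m = .Q → k = 0) ∧ s = form m k i x

/-- An over-approximation of the filled frontiers of derived trees, by root label. -/
def Shape : Lab (Fin 4) Nt AdjNt → List Symbol → Prop
  | .nonterm .S, s => s = [.term 0, .leaf .B, .term 3] ∨
      ∃ s', Marked [.term 1, .term 2] s' ∧ s = .term 0 :: s' ++ [.term 3]
  | .nonterm .B, s => Marked [.term 1, .term 2] s
  | .nonterm .C, s => s = [.term 2]
  | .nonterm .D, s => s = [.term 3]
  | .anode .Q, s => Marked [.foot .Q] s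
  | .anode .R, s => ∃ k, s = form .R k 0 [.foot .R]
  | _, _ => False

theorem form_adjoin {pre post x u w v p q : List Symbol} {m n m' : AdjNt} {k i k' i' : ℕ}
    (hpre : ∀ n, .lbrack n ∉ pre) (hx : ∀ n, .lbrack n ∉ x ∧ .rbrack n ∉ x)
    (hpost : ∀ n, .lbrack n ∉ post ∧ .rbrack n ∉ post)
    (ht : u ++ .lbrack n :: w ++ .rbrack n :: v = pre ++ form m k i x ++ post)
    (hβ : p ++ .foot n :: q = form m' k' i' [.foot n]) :
    m = n ∧ (k = 0 ∨ i' = 0 →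
      u ++ p ++ w ++ q ++ v = pre ++ form m' (k' + k) (i' + i) x ++ post) := by
  set body := List.replicate k (.term 0) ++ List.replicate i (.term 1) ++ x ++
    List.replicate k (.term 2) with hbody
  have ht' : pre ++ .lbrack m :: (body ++ .rbrack m :: (List.replicate i (.term 3) ++ post)) =
      u ++ .lbrack n :: (w ++ .rbrack n :: v) := by
    simpa [form, hbody] using ht.symm
  have hlbrack :
      (.lbrack n : Symbol) ∉ body ++ .rbrack m :: (List.replicate i (.term 3) ++ post) := by
    simp [hbody, hx, hpost, List.mem_replicate]
  obtain ⟨rfl, hmn, hw⟩ := (List.append_cons_inj_of_notMem (hpre n) hlbrack).mp ht'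
  have hbody_rbrack : (.rbrack n : Symbol) ∉ body := by simp [hbody, hx, List.mem_replicate]
  have hpost_rbrack : (.rbrack n : Symbol) ∉ List.replicate i (.term 3) ++ post := by
    simp [hpost, List.mem_replicate]
  obtain ⟨rfl, -, rfl⟩ := (List.append_cons_inj_of_notMem hbody_rbrack hpost_rbrack).mp hw
  have hβ' : (.lbrack m' :: (List.replicate k' (.term 0) ++ List.replicate i' (.term 1))) ++
      .foot n :: (List.replicate k' (.term 2) ++ .rbrack m' :: List.replicate i' (.term 3)) =
      p ++ .foot n :: q := by
    simpa [form] using hβ.symm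
  obtain ⟨rfl, -, rfl⟩ := (List.append_cons_inj_of_notMem (a₂ := (.foot n : Symbol))
    (by simp [List.mem_replicate]) (by simp [List.mem_replicate])).mp hβ'
  refine ⟨by simpa using hmn, ?_⟩
  rintro (rfl | rfl)
  · simp [form, hbody, List.replicate_add, -List.replicate_append_replicate]
  · have hc : List.replicate (k' + k) (.term 2 : Symbol) =
        List.replicate k (.term 2) ++ List.replicate k' (.term 2) := by
      rw [add_comm, List.replicate_add]
    simp [form, hbody, hc, List.replicate_add, -List.replicate_append_replicate]

theorem Shape.anode_eq_form {n : AdjNt} {s : List Symbol} (h : Shape (.anode n) s) :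
    ∃ m k i, (m = .Q → k = 0) ∧ (n = .R → m = .R ∧ i = 0) ∧ s = form m k i [.foot n] := by
  cases n with
  | Q => obtain ⟨m, k, i, hk, rfl⟩ := h; exact ⟨m, k, i, hk, nofun, rfl⟩
  | R => obtain ⟨k, rfl⟩ := h; exact ⟨.R, k, 0, nofun, fun _ => ⟨rfl, rfl⟩, rfl⟩

theorem Marked.adjoin {x s pre post u w v p q : List Symbol} {n : AdjNt} (hs : Marked x s)
    (hpre : ∀ n, .lbrack n ∉ pre) (hx : ∀ n, .lbrack n ∉ x ∧ .rbrack n ∉ x)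
    (hpost : ∀ n, .lbrack n ∉ post ∧ .rbrack n ∉ post)
    (ht : u ++ .lbrack n :: w ++ .rbrack n :: v = pre ++ s ++ post)
    (hβ : Shape (.anode n) (p ++ .foot n :: q)) :
    ∃ s', Marked x s' ∧ u ++ p ++ w ++ q ++ v = pre ++ s' ++ post := by
  obtain ⟨m, k, i, hk, rfl⟩ := hs
  obtain ⟨m', k', i', hk', hR, hβ⟩ := hβ.anode_eq_form
  obtain ⟨rfl, h⟩ := form_adjoin hpre hx hpost ht hβ
  refine ⟨_, ⟨m', k' + k, i' + i, fun hm' => ?_, rfl⟩, h ?_⟩ <;> cases m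
  · simp [hk rfl, hk' hm']
  · exact absurd (hR rfl).1 (by simp [hm'])
  · exact .inl (hk rfl)
  · exact .inr (hR rfl).2

theorem Shape.adjoin {r : Lab (Fin 4) Nt AdjNt} {u w v p q : List Symbol} {n : AdjNt}
    (ht : Shape r (u ++ .lbrack n :: w ++ .rbrack n :: v))
    (hβ : Shape (.anode n) (p ++ .foot n :: q)) : Shape r (u ++ p ++ w ++ q ++ v) := by
  have hmem : (.lbrack n : Symbol) ∈ u ++ .lbrack n :: w ++ .rbrack n :: v := by simp
  match r, ht with
  | .nonterm .S, .inl h | .nonterm .C, h | .nonterm .D, h => rw [h] at hmem; simp at hmem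
  | .nonterm .S, .inr ⟨s, hs, h⟩ =>
    obtain ⟨s', hs', h'⟩ := hs.adjoin (pre := [.term 0]) (post := [.term 3]) (by simp) (by simp)
      (by simp) (by simpa using h) hβ
    exact .inr ⟨s', hs', by simpa using h'⟩
  | .nonterm .B, h | .anode .Q, h =>
    obtain ⟨s', hs', h'⟩ := Marked.adjoin h (pre := []) (post := []) (u := u) (w := w) (v := v)
      (by simp) (by simp) (by simp) (by simp) hβ
    simp only [List.nil_append, List.append_nil] at h'
    rwa [h']
  | .anode .R, ⟨k, h⟩ =>
    obtain ⟨m', k', i', -, hR, hβ⟩ := hβ.anode_eq_form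
    obtain ⟨rfl, h'⟩ := form_adjoin (pre := []) (post := []) (x := [.foot .R]) (by simp)
      (by simp) (by simp) (by simpa using h) hβ
    obtain ⟨rfl, rfl⟩ := hR rfl
    exact ⟨k' + k, by simpa using h' (.inr rfl)⟩

theorem Shape.eq_of_leaf_mem {r : Lab (Fin 4) Nt AdjNt} {s : List Symbol} {A : Nt}
    (h : Shape r s) (hA : .leaf A ∈ s) :
    A = .B ∧ r = .nonterm .S ∧ s = [.term 0, .leaf .B, .term 3] := by
  have hform {m k i x} (hx : .leaf A ∉ x) : .leaf A ∉ form m k i x := by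
    simp [form, List.mem_replicate, hx]
  match r, h with
  | .nonterm .S, .inl h => simp_all
  | .nonterm .S, .inr ⟨_, ⟨_, _, _, _, h'⟩, h⟩ => simp [h, h', hform] at hA
  | .nonterm .B, ⟨_, _, _, _, h⟩ | .anode .Q, ⟨_, _, _, _, h⟩ | .anode .R, ⟨_, h⟩ =>
    simp [h, hform] at hA
  | .nonterm .C, (h : s = _) | .nonterm .D, (h : s = _) => simp [h] at hA

theorem Shape.subst {r : Lab (Fin 4) Nt AdjNt} {u v s : List Symbol} {A : Nt}
    (ht : Shape r (fill (u ++ .leaf A :: v))) (hβ : Shape (.nonterm A) (fill s)) :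
    Shape r (fill (u ++ s ++ v)) := by
  cases A with
  | S =>
    simp only [fill, List.map_append, List.map_cons] at ht
    exact absurd (ht.eq_of_leaf_mem (A := .S) (by simp [fillSymbol])).1 nofun
  | B =>
    simp only [fill, List.map_append, List.map_cons] at ht
    obtain ⟨-, rfl, h⟩ := ht.eq_of_leaf_mem (A := .B) (by simp [fillSymbol])
    obtain ⟨hu, -, hv⟩ := (List.append_cons_inj_of_notMem (a₂ := (.leaf .B : Symbol))
      (x₁ := [.term 0]) (z₁ := [.term 3]) (by simp) (by simp)).mp
      (by simpa [fillSymbol] using h.symm)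
    exact .inr ⟨fill s, hβ, by simp [fill, ← hu, ← hv]⟩
  | C =>
    have hβ : s.map fillSymbol = [fillSymbol (.leaf .C)] := hβ
    simpa [fill, hβ] using ht
  | D =>
    have hβ : s.map fillSymbol = [fillSymbol (.leaf .D)] := hβ
    simpa [fill, hβ] using ht

theorem shape_of_derived {t : Tree} (h : grammar.Derived t) :
    Shape (rootLabel t) (fill (frontier t)) := by
  induction h with
  | init ht =>
    rcases ht with rfl | rfl | rfl | rfl
    · exact .inl rfl
    · exact ⟨.Q, 0, 0, fun _ => rfl, rfl⟩
    · rfl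
    · rfl
  | auxMem ht =>
    rcases ht with rfl | rfl | rfl
    · exact ⟨.Q, 0, 1, fun _ => rfl, rfl⟩
    · exact ⟨.R, 1, 0, nofun, rfl⟩
    · exact ⟨1, rfl⟩
  | subst A _ _ hr iht ihβ =>
    obtain ⟨u, v, hu, hv⟩ := hr.frontier_eq
    rw [hu] at iht
    rw [hr.rootLabel_eq_nonterm] at ihβ
    rcases hr.rootLabel_eq with hroot | hroot
    · rw [hroot, hv]
      exact iht.subst ihβ
    · rw [hroot] at iht
      exact iht.elim
  | adjoin _ _ ha iht ihβ =>
    obtain ⟨n, u, w, v, p, q, hβ, ht, hp, ht'⟩ := ha.frontier_eq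
    rw [ht] at iht
    rw [hβ, hp] at ihβ
    rcases ha.rootLabel_eq with hroot | ⟨n, hroot⟩
    · rw [hroot, ht']
      simp only [fill, List.map_append, List.map_cons] at iht ihβ ⊢
      exact iht.adjoin ihβ
    · rw [hroot] at iht
      exact iht.elim

theorem fill_eq_self {s : List Symbol} (h : ∀ A, .leaf A ∉ s) : fill s = s := by
  conv_rhs => rw [← List.map_id s]
  refine List.map_congr_left fun y hy => ?_
  rcases y with _ | A | _ | _ | _
  · rfl
  · exact absurd hy (h A)
  all_goals rfl

theorem language_subset : grammar.language ⊆ {x | ∃ n m : ℕ, 1 ≤ n ∧ 1 ≤ m ∧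
    x = List.replicate n (0 : Fin 4) ++ List.replicate m 1 ++
      List.replicate n 2 ++ List.replicate m 3} := by
  rintro _ ⟨t, hd, hroot, hc, rfl⟩
  have hs := shape_of_derived hd
  obtain ⟨hy, hleaf⟩ := hc.yield_eq_and_leaf_notMem
  rw [hroot, fill_eq_self hleaf] at hs
  rcases hs with h | ⟨s, ⟨m, k, i, -, rfl⟩, h⟩
  · exact absurd (h ▸ by simp) (hleaf .B)
  · refine ⟨k + 1, i + 1, by omega, by omega, ?_⟩
    rw [hy, h, List.replicate_succ' (n := i), List.replicate_succ' (n := i)]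
    simp [form, Token.term?, List.filterMap_cons, List.filterMap_replicate_of_some,
      List.replicate_succ]

def snocD (x : Tree) : Tree := .node (.anode .Q) [x, αD]
def consB (x : Tree) : Tree := .node (.anode .Q) [leaf (.term 1), x]
def wrapAC (x : Tree) : Tree := .node (.anode .R) [leaf (.term 0), x, αC]
def wrapR (x : Tree) : Tree := .node (.anode .R) [x]
def markQ (x : Tree) : Tree := .node (.adj .Q) [leaf (.term 1), x]
def markR (x : Tree) : Tree := .node (.adj .R) [leaf (.term 0), x, αC]

def βbD : Tree := snocD (markQ (leaf (.foot .Q)))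
def βaC : Tree := .node (.anode .Q) [markR (leaf (.foot .Q))]
def βa'C : Tree := wrapR (markR (leaf (.foot .R)))

theorem derived_αC : grammar.Derived αC := .init (by simp [grammar])
theorem derived_αD : grammar.Derived αD := .init (by simp [grammar])

theorem derived_βbD : grammar.Derived βbD :=
  .subst .D (.auxMem (t := βb) (by simp [grammar])) derived_αD (.step _ [_] [] (.here rfl))

theorem derived_βaC : grammar.Derived βaC :=
  .subst .C (.auxMem (t := βa) (by simp [grammar])) derived_αC
    (.step _ [] [] (.step _ [_, _] [] (.here rfl)))

theorem derived_βa'C : grammar.Derived βa'C :=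
  .subst .C (.auxMem (t := βa') (by simp [grammar])) derived_αC
    (.step _ [] [] (.step _ [_, _] [] (.here rfl)))

theorem adjoin_βbD_markQ (s : Tree) : Adjoin βbD (markQ s) (snocD (markQ (consB s))) := by
  refine .here AdjNt.Q _ rfl ?_
  exact .step _ [] [αD] (.step _ [leaf (.term 1)] [] .here)

theorem adjoin_βaC_markQ (s : Tree) :
    Adjoin βaC (markQ s) (.node (.anode .Q) [markR (consB s)]) := by
  refine .here AdjNt.Q _ rfl ?_
  exact .step _ [] [] (.step _ [leaf (.term 0)] [αC] .here)

theorem adjoin_βa'C_markR (u : Tree) : Adjoin βa'C (markR u) (wrapR (markR (wrapAC u))) := by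
  refine .here AdjNt.R _ rfl ?_
  exact .step _ [] [] (.step _ [leaf (.term 0)] [αC] .here)

def bTree : ℕ → ℕ → Tree
  | 0, i => .node (.nonterm .B) [snocD^[i] (markQ (consB^[i] αC))]
  | k + 1, i => .node (.nonterm .B)
      [snocD^[i] (.node (.anode .Q) [wrapR^[k] (markR (wrapAC^[k] (consB^[i + 1] αC)))])]

theorem derived_bTree (k i : ℕ) : grammar.Derived (bTree k i) := by
  have hD {β x x' : Tree} (h : Adjoin β x x') : Adjoin β (snocD x) (snocD x') :=
    .step _ [] [αD] h
  induction k with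
  | zero =>
    induction i with
    | zero =>
      refine .subst .C (.init (t := αB) (by simp [grammar])) derived_αC ?_
      exact .step _ [] [] (.step _ [leaf (.term 1)] [] (.here rfl))
    | succ i ih =>
      have h := Adjoin.iterate hD i (adjoin_βbD_markQ (consB^[i] αC))
      rw [← Function.iterate_succ_apply, ← Function.iterate_succ_apply' consB] at h
      exact .adjoin ih derived_βbD (.step _ [] [] h)
  | succ k ih =>
    cases k with
    | zero =>
      have h := Adjoin.iterate hD i (adjoin_βaC_markQ (consB^[i] αC))
      rw [← Function.iterate_succ_apply' consB] at h
      exact .adjoin ih derived_βaC (.step _ [] [] h)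
    | succ k =>
      have h := Adjoin.iterate (f := wrapR) (fun h => .step _ [] [] h) k
        (adjoin_βa'C_markR (wrapAC^[k] (consB^[i + 1] αC)))
      rw [← Function.iterate_succ_apply wrapR, ← Function.iterate_succ_apply' wrapAC] at h
      exact .adjoin ih derived_βa'C
        (.step _ [] [] (Adjoin.iterate hD i (.step (.anode .Q) [] [] h)))

theorem complete_iterate {f : Tree → Tree} {a c : Fin 4} {p q : ℕ}
    (hf : ∀ x, Complete x →
      Complete (f x) ∧ yield (f x) = .replicate p a ++ yield x ++ .replicate q c)
    (n : ℕ) {x : Tree} (hx : Complete x) :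
    Complete (f^[n] x) ∧
      yield (f^[n] x) = .replicate (n * p) a ++ yield x ++ .replicate (n * q) c := by
  induction n with
  | zero => simpa using hx
  | succ n ih =>
    obtain ⟨hc, hy⟩ := hf _ ih.1
    refine ⟨by simpa only [Function.iterate_succ_apply'] using hc, ?_⟩
    rw [Function.iterate_succ_apply', hy, ih.2, Nat.succ_mul, Nat.succ_mul,
      Nat.add_comm (n * p), List.replicate_add, List.replicate_add]
    simp only [List.append_assoc]

theorem complete_bTree (k i : ℕ) : Complete (bTree k i) ∧ yield (bTree k i) =
    .replicate k 0 ++ .replicate (i + 1) 1 ++ .replicate (k + 1) 2 ++ .replicate i 3 := by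
  have hC : Complete αC ∧ yield αC = [2] := by
    simp [αC, leaf, Complete, CompleteList, yield, yields]
  have hD := complete_iterate (f := snocD) (a := 0) (p := 0) (c := 3) (q := 1)
    fun x hx => by simp [snocD, αD, leaf, Complete, CompleteList, yield, yields, hx]
  have hB := complete_iterate (f := consB) (a := 1) (p := 1) (c := 0) (q := 0)
    fun x hx => by simp [consB, leaf, Complete, CompleteList, yield, yields, hx]
  have hAC := complete_iterate (f := wrapAC) (a := 0) (p := 1) (c := 2) (q := 1)
    fun x hx => by simp [wrapAC, αC, leaf, Complete, CompleteList, yield, yields, hx]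
  have hR := complete_iterate (f := wrapR) (a := 0) (p := 0) (c := 0) (q := 0)
    fun x hx => by simp [wrapR, Complete, CompleteList, yield, yields, hx]
  have hQ {x : Tree} (hx : Complete x) : Complete (markQ x) ∧ yield (markQ x) = 1 :: yield x := by
    simp [markQ, leaf, Complete, CompleteList, yield, yields, hx]
  have hR' {x : Tree} (hx : Complete x) :
      Complete (markR x) ∧ yield (markR x) = 0 :: yield x ++ [2] := by
    simp [markR, αC, leaf, Complete, CompleteList, yield, yields, hx]
  have hWrap {l : Lab (Fin 4) Nt AdjNt} (hl : l = .nonterm .B ∨ l = .anode .Q) {x : Tree}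
      (hx : Complete x) : Complete (.node l [x]) ∧ yield (.node l [x]) = yield x := by
    rcases hl with rfl | rfl <;> simp [Complete, CompleteList, yield, yields, hx]
  cases k with
  | zero =>
    obtain ⟨c₁, y₁⟩ := hB i hC.1
    obtain ⟨c₂, y₂⟩ := hQ c₁
    obtain ⟨c₃, y₃⟩ := hD i c₂
    obtain ⟨c₄, y₄⟩ := hWrap (.inl rfl) c₃
    refine ⟨c₄, ?_⟩
    rw [bTree, y₄, y₃, y₂, y₁, hC.2]
    simp [List.replicate_succ]
  | succ k =>
    obtain ⟨c₁, y₁⟩ := hB (i + 1) hC.1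
    obtain ⟨c₂, y₂⟩ := hAC k c₁
    obtain ⟨c₃, y₃⟩ := hR' c₂
    obtain ⟨c₄, y₄⟩ := hR k c₃
    obtain ⟨c₅, y₅⟩ := hWrap (.inr rfl) c₄
    obtain ⟨c₆, y₆⟩ := hD i c₅
    obtain ⟨c₇, y₇⟩ := hWrap (.inl rfl) c₆
    refine ⟨c₇, ?_⟩
    rw [bTree, y₇, y₆, y₅, y₄, y₃, y₂, y₁, hC.2, List.replicate_succ' (n := k + 1)]
    simp [List.replicate_succ]

def sTree (k i : ℕ) : Tree := .node (.nonterm .S) [leaf (.term 0), bTree k i, αD]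

theorem derived_sTree (k i : ℕ) : grammar.Derived (sTree k i) := by
  have hS : grammar.Derived (.node (.nonterm .S) [leaf (.term 0), leaf (.substLeaf .B), αD]) := by
    refine .subst .D (.init (t := αS) (by simp [grammar])) derived_αD ?_
    exact .step _ [_, _] [] (.here rfl)
  refine .subst .B hS (derived_bTree k i) ?_
  exact .step _ [leaf (.term 0)] [αD] (.here (by cases k <;> rfl))

theorem subset_language : {x | ∃ n m : ℕ, 1 ≤ n ∧ 1 ≤ m ∧
    x = List.replicate n (0 : Fin 4) ++ List.replicate m 1 ++
      List.replicate n 2 ++ List.replicate m 3} ⊆ grammar.language := by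
  rintro _ ⟨n, m, hn, hm, rfl⟩
  obtain ⟨k, rfl⟩ : ∃ k, n = k + 1 := ⟨n - 1, by omega⟩
  obtain ⟨i, rfl⟩ : ∃ i, m = i + 1 := ⟨m - 1, by omega⟩
  obtain ⟨hc, hy⟩ := complete_bTree k i
  refine ⟨sTree k i, derived_sTree k i, rfl, ?_, ?_⟩
  · simp [sTree, αD, leaf, Complete, CompleteList, hc]
  · rw [List.replicate_succ' (n := i) (a := 3)]
    simp [sTree, αD, leaf, yield, yields, hy, List.replicate_succ]

end Crossed

/-- There exists a well-formed LTAG₀ grammar generating the crossed-dependency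
language { aⁿ bᵐ cⁿ dᵐ : n, m ≥ 1 }. -/
theorem exists_ltag0_crossed :
    ∃ (NS NA : Type) (g : LTAG0 (Fin 4) NS NA), g.WellFormed ∧
      g.language = {x | ∃ n m : ℕ, 1 ≤ n ∧ 1 ≤ m ∧
        x = List.replicate n (0 : Fin 4) ++ List.replicate m 1 ++
            List.replicate n 2 ++ List.replicate m 3} :=
  ⟨Crossed.Nt, Crossed.AdjNt, Crossed.grammar, Crossed.grammar_wellFormed,
    Crossed.language_subset.antisymm Crossed.subset_language⟩
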